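/- arXiv:2504.13663 — 3 statements merged into one kernel-verified Lean document; each statement's English description precedes it below -/
import Mathlib

section
/- Let K be a compact, perfectly normal topological space and X a real Banach space. A function f ∈ C(K,X) with ‖f‖ = 1 is a (ρ₋)-left symmetric point of C(K,X) if and only if both of the following hold: (i) there exists k₀ ∈ K such that ‖f(k₀)‖ = 1 and f(k) = 0 for all k ∈ K with k ≠ k₀, and (ii) f(k₀) is a (ρ₋)-left symmetric point of X. -/
/-! The left norm derivative `ρ'₋(x, y)` is `‖x‖` times the left derivative at `0` of the convex
function `t ↦ ‖x + t • y‖`; so it depends only on the germ of that function to the left of `0`,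
and it is bounded below by `‖x‖` times any left difference quotient.

If `f` is left symmetric with `‖f k₀‖ = 1 = ‖f‖` but `f k ≠ 0` for some `k ≠ k₀`, take an Urysohn
function `φ` with `φ k₀ = 0` and `φ k = 1`. Then `‖f + t • φ f‖ = 1` for `t ∈ (-1, 0)`, so
`ρ'₋(f, φ f) = 0`, whereas `‖φ f - (A / 4) • f‖ ≤ A - A² / 8` for `A = ‖φ f‖ > 0` forces
`ρ'₋(φ f, f) ≥ A² / 2`. So `f` is supported at `k₀`, which is then an isolated point. For such `f`
and every `g`, near `t = 0` the norm `‖f + t • g‖` is `‖f k₀ + t • g k₀‖`, and `‖g + t • f‖` is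
the maximum of `‖g k₀ + t • f k₀‖` and the constant norm of `g` off `k₀`; this transfers left
symmetry between `f` and `f k₀`. -/

open Filter Topology Set Metric NormedSpace

noncomputable section

/-- Birkhoff–James orthogonality: `x ⊥_B y` iff `‖x + t • y‖ ≥ ‖x‖` for all real `t`. -/
def BJOrth {E : Type*} [NormedAddCommGroup E] [NormedSpace ℝ E] (x y : E) : Prop :=
  ∀ t : ℝ, ‖x‖ ≤ ‖x + t • y‖

/-- The norm derivative `ρ'₊(x,y) = ‖x‖ · lim_{t→0⁺} (‖x+ty‖-‖x‖)/t`. -/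
def rhoPlus {E : Type*} [NormedAddCommGroup E] [NormedSpace ℝ E] (x y : E) : ℝ :=
  ‖x‖ * limUnder (𝓝[>] (0 : ℝ)) (fun t => (‖x + t • y‖ - ‖x‖) / t)

/-- The norm derivative `ρ'₋(x,y) = ‖x‖ · lim_{t→0⁻} (‖x+ty‖-‖x‖)/t`. -/
def rhoMinus {E : Type*} [NormedAddCommGroup E] [NormedSpace ℝ E] (x y : E) : ℝ :=
  ‖x‖ * limUnder (𝓝[<] (0 : ℝ)) (fun t => (‖x + t • y‖ - ‖x‖) / t)

/-- The norm derivative `ρ'(x,y) = (ρ'₊(x,y) + ρ'₋(x,y))/2`. -/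
def rhoDer {E : Type*} [NormedAddCommGroup E] [NormedSpace ℝ E] (x y : E) : ℝ :=
  (rhoPlus x y + rhoMinus x y) / 2

/-- `x` is an exposed point of the closed unit ball of `E`: there is a norm-one functional `f`
with `f x = 1` and `f u < 1` for every `u` in the ball with `u ≠ x`. -/
def ExposedPt {E : Type*} [NormedAddCommGroup E] [NormedSpace ℝ E] (x : E) : Prop :=
  ‖x‖ ≤ 1 ∧ ∃ f : E →L[ℝ] ℝ, ‖f‖ = 1 ∧ f x = 1 ∧ ∀ u : E, ‖u‖ ≤ 1 → u ≠ x → f u < 1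

section NormDerivative

variable {E F : Type*} [NormedAddCommGroup E] [NormedSpace ℝ E]
  [NormedAddCommGroup F] [NormedSpace ℝ F]

def IsRhoMinusLeftSymmetric (x : E) : Prop :=
  ∀ y : E, rhoMinus x y = 0 → rhoMinus y x = 0

theorem convexOn_norm_add_smul (x y : E) : ConvexOn ℝ univ fun t : ℝ => ‖x + t • y‖ := by
  have h := convexOn_univ_norm.comp_affineMap (AffineMap.lineMap x (x + y) : ℝ →ᵃ[ℝ] E)
  simpa [Function.comp_def, AffineMap.lineMap_apply_module', add_comm] using h

theorem rhoMinus_eq_mul_derivWithin (x y : E) :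
    rhoMinus x y = ‖x‖ * derivWithin (fun t : ℝ => ‖x + t • y‖) (Iio 0) 0 := by
  have hd := (convexOn_norm_add_smul x y).hasDerivWithinAt_leftDeriv_of_mem_interior
    (by simp : (0 : ℝ) ∈ interior univ)
  rw [hasDerivWithinAt_iff_tendsto_slope' self_notMem_Iio] at hd
  refine congrArg (‖x‖ * ·) (Tendsto.limUnder_eq (hd.congr fun t => ?_))
  simp [slope_def_field]

theorem rhoMinus_congr {x y : E} {z w : F} (hn : ‖x‖ = ‖z‖)
    (h : ∀ᶠ t in 𝓝[<] (0 : ℝ), ‖x + t • y‖ = ‖z + t • w‖) : rhoMinus x y = rhoMinus z w := by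
  rw [rhoMinus_eq_mul_derivWithin, rhoMinus_eq_mul_derivWithin, hn,
    Filter.EventuallyEq.derivWithin_eq h (by simpa using hn)]

theorem rhoMinus_eq_zero_of_eventually_norm_eq {x y : E}
    (h : ∀ᶠ t in 𝓝[<] (0 : ℝ), ‖x + t • y‖ = ‖x‖) : rhoMinus x y = 0 := by
  rw [rhoMinus_congr (w := (0 : E)) rfl (by simpa using h), rhoMinus_eq_mul_derivWithin]
  simp

theorem div_le_derivWithin_norm_add_smul (x y : E) {t : ℝ} (ht : t < 0) :
    (‖x + t • y‖ - ‖x‖) / t ≤ derivWithin (fun s : ℝ => ‖x + s • y‖) (Iio 0) 0 := by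
  have h := (convexOn_norm_add_smul x y).slope_le_leftDeriv_of_mem_interior (mem_univ t)
    (by simp : (0 : ℝ) ∈ interior univ) ht
  simpa [slope_comm _ t, slope_def_field] using h

theorem mul_le_rhoMinus_of_norm_add_smul_le {x y : E} {t c : ℝ} (ht : t < 0)
    (h : ‖x + t • y‖ ≤ ‖x‖ + t * c) : ‖x‖ * c ≤ rhoMinus x y := by
  rw [rhoMinus_eq_mul_derivWithin]
  refine mul_le_mul_of_nonneg_left ?_ (norm_nonneg x)
  refine le_trans ?_ (div_le_derivWithin_norm_add_smul x y ht)
  rw [le_div_iff_of_neg ht]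
  linarith

theorem norm_le_norm_add_smul_of_rhoMinus_eq_zero {x y : E} (h : rhoMinus x y = 0) {t : ℝ}
    (ht : t < 0) : ‖x‖ ≤ ‖x + t • y‖ := by
  rcases eq_or_ne x 0 with rfl | hx
  · simp
  rw [rhoMinus_eq_mul_derivWithin, mul_eq_zero, norm_eq_zero] at h
  have hq := (div_le_derivWithin_norm_add_smul x y ht).trans_eq (h.resolve_left hx)
  rw [div_le_iff_of_neg ht] at hq
  linarith

end NormDerivative

theorem abs_sub_quarter_mul_le {a b c : ℝ} (ha₀ : 0 ≤ a) (ha₁ : a ≤ 1) (hb₀ : 0 ≤ b) (hb₁ : b ≤ 1)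
    (hab : a * b ≤ c) (hc₁ : c ≤ 1) : |a - c / 4| * b ≤ c + -(c / 4) * (c / 2) := by
  have hc₀ : 0 ≤ c := (mul_nonneg ha₀ hb₀).trans hab
  rcases le_total (c / 4) a with hac | hac
  · rw [abs_of_nonneg (by linarith)]
    rcases le_total (c / 2) b with hbc | hbc
    · nlinarith [mul_le_mul_of_nonneg_left hbc hc₀]
    · nlinarith [mul_le_mul_of_nonneg_left ha₁ hb₀]
  · rw [abs_of_nonpos (by linarith)]
    nlinarith [mul_le_mul_of_nonneg_left hb₁ (sub_nonneg.2 hac)]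

namespace ContinuousMap

variable {K X : Type*} [TopologicalSpace K] [NormedAddCommGroup X]

def indicator {s : Set K} (hs : IsClopen s) (h : C(K, X)) : C(K, X) :=
  ⟨s.indicator h, hs.continuous_indicator h.continuous⟩

@[simp]
theorem indicator_apply {s : Set K} (hs : IsClopen s) (h : C(K, X)) (k : K) :
    h.indicator hs k = s.indicator h k :=
  rfl

theorem isClopen_singleton_of_forall_ne_eq_zero [T1Space K] {f : C(K, X)} {k₀ : K}
    (hk₀ : f k₀ ≠ 0) (hf : ∀ k, k ≠ k₀ → f k = 0) : IsClopen {k₀} := by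
  refine ⟨isClosed_singleton, ?_⟩
  convert isOpen_ne_fun f.continuous (continuous_const (y := (0 : X))) using 1
  ext k
  exact ⟨fun hk => hk ▸ hk₀, fun hk => by_contra fun hne => hk (hf k hne)⟩

variable [CompactSpace K]

theorem exists_norm_apply_eq_norm [Nonempty K] (f : C(K, X)) : ∃ k, ‖f k‖ = ‖f‖ := by
  obtain ⟨k, -, hk⟩ := isCompact_univ.exists_isMaxOn univ_nonempty
    (continuous_norm.comp f.continuous).continuousOn
  exact ⟨k, le_antisymm (f.norm_coe_le_norm k)
    ((f.norm_le (norm_nonneg _)).2 fun k' => hk (mem_univ k'))⟩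

theorem norm_eq_norm_apply_of_forall_le {f : C(K, X)} {k₀ : K} (hf : ∀ k, ‖f k‖ ≤ ‖f k₀‖) :
    ‖f‖ = ‖f k₀‖ :=
  le_antisymm ((f.norm_le (norm_nonneg _)).2 hf) (f.norm_coe_le_norm k₀)

theorem norm_eq_norm_apply_of_forall_ne {f : C(K, X)} {k₀ : K}
    (hf : ∀ k, k ≠ k₀ → f k = 0) : ‖f‖ = ‖f k₀‖ := by
  refine norm_eq_norm_apply_of_forall_le fun k => ?_
  rcases eq_or_ne k k₀ with rfl | hk
  · rfl
  · simp [hf k hk]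

theorem norm_eq_max_norm_indicator_compl {k₀ : K} (hk₀ : IsClopen {k₀}) (h : C(K, X)) :
    ‖h‖ = max ‖h k₀‖ ‖h.indicator hk₀.compl‖ := by
  refine le_antisymm ((h.norm_le (le_max_of_le_left (norm_nonneg _))).2 fun k => ?_)
    (max_le (h.norm_coe_le_norm k₀) (((h.indicator _).norm_le (norm_nonneg _)).2 fun k => ?_))
  · rcases eq_or_ne k k₀ with rfl | hk
    · exact le_max_left _ _
    · refine le_max_of_le_right (le_of_eq_of_le ?_ ((h.indicator _).norm_coe_le_norm k))
      simp [hk]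
  · by_cases hk : k = k₀
    · simp [hk]
    · simpa [hk] using h.norm_coe_le_norm k

variable [NormedSpace ℝ X]

theorem rhoMinus_eq_rhoMinus_apply_of_forall_ne {f g : C(K, X)} {k₀ : K}
    (hf : ∀ k, k ≠ k₀ → f k = 0) (hg : ∀ k, k ≠ k₀ → g k = 0) :
    rhoMinus f g = rhoMinus (f k₀) (g k₀) := by
  refine rhoMinus_congr (norm_eq_norm_apply_of_forall_ne hf) (Eventually.of_forall fun t => ?_)
  refine norm_eq_norm_apply_of_forall_ne fun k hk => ?_
  simp [hf k hk, hg k hk]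

theorem isRhoMinusLeftSymmetric_apply {f : C(K, X)} {k₀ : K} (hk₀ : IsClopen {k₀})
    (hf : ∀ k, k ≠ k₀ → f k = 0) (hsym : IsRhoMinusLeftSymmetric f) :
    IsRhoMinusLeftSymmetric (f k₀) := by
  intro y hy
  set g := (const K y).indicator hk₀
  have hg : ∀ k, k ≠ k₀ → g k = 0 := fun k hk => by simp [g, hk]
  have hgk₀ : g k₀ = y := by simp [g]
  rw [← hgk₀, ← rhoMinus_eq_rhoMinus_apply_of_forall_ne hg hf]
  exact hsym g (by rwa [rhoMinus_eq_rhoMinus_apply_of_forall_ne hf hg, hgk₀])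

theorem rhoMinus_eq_rhoMinus_apply_of_forall_ne_left {f : C(K, X)} {k₀ : K} (hk₀ : f k₀ ≠ 0)
    (hf : ∀ k, k ≠ k₀ → f k = 0) (g : C(K, X)) : rhoMinus f g = rhoMinus (f k₀) (g k₀) := by
  refine rhoMinus_congr (norm_eq_norm_apply_of_forall_ne hf) ?_
  have hsmall : ∀ᶠ t in 𝓝 (0 : ℝ), |t| * ‖g‖ < ‖f k₀ + t • g k₀‖ :=
    (continuous_abs.mul continuous_const).continuousAt.eventually_lt
      (by fun_prop : Continuous fun t : ℝ => ‖f k₀ + t • g k₀‖).continuousAt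
      (by simpa using hk₀)
  filter_upwards [nhdsWithin_le_nhds hsmall] with t ht
  refine norm_eq_norm_apply_of_forall_le fun k => ?_
  rcases eq_or_ne k k₀ with rfl | hk
  · rfl
  · have := norm_smul_le t (g k)
    simp only [add_apply, smul_apply, hf k hk, zero_add, Real.norm_eq_abs] at this ⊢
    nlinarith [g.norm_coe_le_norm k, abs_nonneg t]

theorem rhoMinus_eq_zero_of_rhoMinus_apply_eq_zero {f : C(K, X)} {k₀ : K} (hk₀ : IsClopen {k₀})
    (hf : ∀ k, k ≠ k₀ → f k = 0) (g : C(K, X)) (h : rhoMinus (g k₀) (f k₀) = 0) :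
    rhoMinus g f = 0 := by
  set g' := g.indicator hk₀.compl
  have hind (t : ℝ) : (g + t • f).indicator hk₀.compl = g' := by
    ext k
    rcases eq_or_ne k k₀ with rfl | hk
    · simp [g']
    · simp [g', hk, hf k hk]
  have hnorm (t : ℝ) : ‖g + t • f‖ = max ‖g k₀ + t • f k₀‖ ‖g'‖ := by
    rw [norm_eq_max_norm_indicator_compl hk₀, hind]
    rfl
  have hg : ‖g‖ = max ‖g k₀‖ ‖g'‖ := by simpa using hnorm 0
  rcases le_or_gt ‖g'‖ ‖g k₀‖ with hle | hlt
  · have hmono : ∀ t < (0 : ℝ), ‖g k₀‖ ≤ ‖g k₀ + t • f k₀‖ :=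
      fun t ht => norm_le_norm_add_smul_of_rhoMinus_eq_zero h ht
    rw [← h]
    refine rhoMinus_congr (by rw [hg, max_eq_left hle]) ?_
    filter_upwards [self_mem_nhdsWithin] with t (ht : t < 0)
    rw [hnorm, max_eq_left (hle.trans (hmono t ht))]
  · refine rhoMinus_eq_zero_of_eventually_norm_eq ?_
    have hsmall : ∀ᶠ t in 𝓝 (0 : ℝ), ‖g k₀ + t • f k₀‖ < ‖g'‖ :=
      (by fun_prop : Continuous fun t : ℝ => ‖g k₀ + t • f k₀‖).continuousAt.eventually_lt
        continuousAt_const (by simpa using hlt)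
    filter_upwards [nhdsWithin_le_nhds hsmall] with t ht
    rw [hnorm, hg, max_eq_right ht.le, max_eq_right hlt.le]

theorem isRhoMinusLeftSymmetric_of_apply {f : C(K, X)} {k₀ : K} (hk₀ : IsClopen {k₀})
    (hfk₀ : f k₀ ≠ 0) (hf : ∀ k, k ≠ k₀ → f k = 0) (hsym : IsRhoMinusLeftSymmetric (f k₀)) :
    IsRhoMinusLeftSymmetric f := fun g hfg =>
  rhoMinus_eq_zero_of_rhoMinus_apply_eq_zero hk₀ hf g
    (hsym _ (rhoMinus_eq_rhoMinus_apply_of_forall_ne_left hfk₀ hf g ▸ hfg))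

theorem rhoMinus_smul_eq_zero {f : C(K, X)} {φ : C(K, ℝ)} (hφ : ∀ k, φ k ∈ Icc 0 1) {k₀ : K}
    (hφk₀ : φ k₀ = 0) (hfk₀ : ‖f k₀‖ = ‖f‖) : rhoMinus f (φ • f) = 0 := by
  refine rhoMinus_eq_zero_of_eventually_norm_eq ?_
  filter_upwards [Ioo_mem_nhdsLT neg_one_lt_zero] with t ⟨ht₁, ht₀⟩
  have happ : ∀ k, (f + t • φ • f) k = (1 + t * φ k) • f k := fun k => by
    simp only [add_apply, smul_apply, smul_apply']
    module
  rw [← hfk₀, norm_eq_norm_apply_of_forall_le (k₀ := k₀) fun k => ?_, happ, hφk₀, mul_zero,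
    add_zero, one_smul]
  have h₀ : 0 ≤ 1 + t * φ k := by nlinarith [(hφ k).1, (hφ k).2]
  have h₁ : 1 + t * φ k ≤ 1 := by nlinarith [(hφ k).1]
  rw [happ, happ, hφk₀, mul_zero, add_zero, one_smul, hfk₀, norm_smul, Real.norm_eq_abs,
    abs_of_nonneg h₀]
  nlinarith [f.norm_coe_le_norm k, norm_nonneg (f k)]

theorem mul_half_le_rhoMinus_smul {f : C(K, X)} (hf : ‖f‖ ≤ 1) {φ : C(K, ℝ)}
    (hφ : ∀ k, φ k ∈ Icc 0 1) : ‖φ • f‖ * (‖φ • f‖ / 2) ≤ rhoMinus (φ • f) f := by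
  set A := ‖φ • f‖
  have hle : ∀ k, ‖f k‖ ≤ 1 := fun k => (f.norm_coe_le_norm k).trans hf
  have hφf : ∀ k, φ k * ‖f k‖ ≤ A := fun k => by
    simpa [norm_smul, abs_of_nonneg (hφ k).1] using (φ • f).norm_coe_le_norm k
  have hA₀ : 0 ≤ A := norm_nonneg _
  have hA₁ : A ≤ 1 := ((φ • f).norm_le zero_le_one).2 fun k => by
    simpa [norm_smul, abs_of_nonneg (hφ k).1] using
      mul_le_one₀ (hφ k).2 (norm_nonneg _) (hle k)
  rcases hA₀.eq_or_lt with hA | hA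
  · rw [← hA, zero_mul, rhoMinus_eq_mul_derivWithin, show ‖φ • f‖ = 0 from hA.symm, zero_mul]
  refine mul_le_rhoMinus_of_norm_add_smul_le (t := -(A / 4)) (by linarith)
    (((φ • f + _).norm_le (by nlinarith)).2 fun k => ?_)
  have happ : (φ • f + (-(A / 4)) • f) k = (φ k - A / 4) • f k := by
    simp only [add_apply, smul_apply, smul_apply']
    module
  rw [happ, norm_smul, Real.norm_eq_abs]
  exact abs_sub_quarter_mul_le (hφ k).1 (hφ k).2 (norm_nonneg _) (hle k) (hφf k) hA₁

theorem apply_eq_zero_of_isRhoMinusLeftSymmetric [T2Space K] {f : C(K, X)}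
    (hsym : IsRhoMinusLeftSymmetric f) (hf : ‖f‖ ≤ 1) {k₀ : K} (hk₀ : ‖f k₀‖ = ‖f‖) {k : K}
    (hk : k ≠ k₀) : f k = 0 := by
  by_contra hfk
  obtain ⟨φ, hφk₀, hφk, hφ⟩ := exists_continuous_zero_one_of_isClosed
    (isClosed_singleton (x := k₀)) (isClosed_singleton (x := k)) (disjoint_singleton.2 hk.symm)
  have hpos : 0 < ‖φ • f‖ := by
    refine (norm_pos_iff.2 hfk).trans_le ?_
    simpa [hφk rfl] using (φ • f).norm_coe_le_norm k
  have hle := mul_half_le_rhoMinus_smul hf hφ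
  rw [hsym _ (rhoMinus_smul_eq_zero hφ (hφk₀ rfl) hk₀)] at hle
  nlinarith

end ContinuousMap

open ContinuousMap in
theorem stmt15_general {K X : Type*} [TopologicalSpace K] [CompactSpace K] [T2Space K]
    [NormedAddCommGroup X] [NormedSpace ℝ X]
    (f : C(K, X)) (hf : ‖f‖ = 1) :
    (∀ g : C(K, X), rhoMinus f g = 0 → rhoMinus g f = 0) ↔
      (∃ k₀ : K, ‖f k₀‖ = 1 ∧ (∀ k : K, k ≠ k₀ → f k = 0) ∧
        (∀ y : X, rhoMinus (f k₀) y = 0 → rhoMinus y (f k₀) = 0)) := by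
  have hne_zero (k₀ : K) (hk₀ : ‖f k₀‖ = 1) : f k₀ ≠ 0 := norm_ne_zero_iff.1 (hk₀ ▸ one_ne_zero)
  constructor
  · intro hsym
    have : Nonempty K := by
      by_contra hK
      rw [not_nonempty_iff] at hK
      simp [Subsingleton.elim f 0] at hf
    obtain ⟨k₀, hk₀⟩ := f.exists_norm_apply_eq_norm
    have hzero (k : K) (hk : k ≠ k₀) : f k = 0 :=
      apply_eq_zero_of_isRhoMinusLeftSymmetric hsym hf.le hk₀ hk
    rw [hf] at hk₀
    exact ⟨k₀, hk₀, hzero, isRhoMinusLeftSymmetric_apply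
      (isClopen_singleton_of_forall_ne_eq_zero (hne_zero k₀ hk₀) hzero) hzero hsym⟩
  · rintro ⟨k₀, hk₀, hzero, hsym⟩
    exact isRhoMinusLeftSymmetric_of_apply
      (isClopen_singleton_of_forall_ne_eq_zero (hne_zero k₀ hk₀) hzero) (hne_zero k₀ hk₀) hzero hsym

theorem stmt15 {K X : Type*} [TopologicalSpace K] [CompactSpace K] [T2Space K]
    [PerfectlyNormalSpace K]
    [NormedAddCommGroup X] [NormedSpace ℝ X] [CompleteSpace X]
    (f : C(K, X)) (hf : ‖f‖ = 1) :
    (∀ g : C(K, X), rhoMinus f g = 0 → rhoMinus g f = 0) ↔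
      (∃ k₀ : K, ‖f k₀‖ = 1 ∧ (∀ k : K, k ≠ k₀ → f k = 0) ∧
        (∀ y : X, rhoMinus (f k₀) y = 0 → rhoMinus y (f k₀) = 0)) :=
  stmt15_general f hf
end
end

section
/- Let K be a compact, perfectly normal topological space. A real-valued function f ∈ C(K) with ‖f‖ = 1 is a ρ-left symmetric point of C(K) if and only if for every k ∈ K, |f(k)| < 1 implies f(k) = 0. -/
open Filter Topology Set Metric NormedSpace

noncomputable section

/-!
In `C(K)` the one-sided norm derivatives are `ρ'₊(f,g) = max_{M(f)} f g` and
`ρ'₋(f,g) = min_{M(f)} f g`, where `M(f) = {k | |f k| = ‖f‖}` is the peak set of `f`.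
If `f` only takes the values `0, ±1`, then on `M(g)` the product `f g` only takes the values
`0, ±‖g‖`, and this rigidity makes `ρ'(f,g) = 0` force `ρ'(g,f) = 0`. Conversely, if
`0 < |f k₀| < 1`, perfect normality makes `{k₀}` a `G_δ`, so Urysohn's lemma gives `g` with
`M(g) = {k₀}` and `g = 0` on `M(f)`; then `ρ'(f,g) = 0` but `ρ'(g,f) = f k₀ ≠ 0`.
-/

theorem IsCompact.exists_lt_forall_le_of_forall_lt {X : Type*} [TopologicalSpace X] {s : Set X}
    (hs : IsCompact s) {φ : X → ℝ} (hφ : ContinuousOn φ s) {y : ℝ} (h : ∀ x ∈ s, φ x < y) :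
    ∃ m < y, ∀ x ∈ s, φ x ≤ m := by
  rcases s.eq_empty_or_nonempty with rfl | hne
  · exact ⟨y - 1, by linarith, by simp⟩
  · obtain ⟨x₀, hx₀, hmax⟩ := hs.exists_isMaxOn hne hφ
    exact ⟨φ x₀, h x₀ hx₀, fun x hx => hmax hx⟩

section NormDerivative

variable {E : Type*} [NormedAddCommGroup E] [NormedSpace ℝ E]

theorem rhoPlus_eq_of_tendsto {x y : E} {L : ℝ}
    (h : Tendsto (fun t : ℝ => (‖x + t • y‖ - ‖x‖) / t) (𝓝[>] 0) (𝓝 L)) :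
    rhoPlus x y = ‖x‖ * L := by
  rw [rhoPlus, h.limUnder_eq]

theorem rhoMinus_eq_of_tendsto {x y : E} {L : ℝ}
    (h : Tendsto (fun t : ℝ => (‖x + t • -y‖ - ‖x‖) / t) (𝓝[>] 0) (𝓝 L)) :
    rhoMinus x y = -(‖x‖ * L) := by
  have hneg : Tendsto (fun t : ℝ => (‖x + t • y‖ - ‖x‖) / t) (𝓝[<] 0) (𝓝 (-L)) := by
    refine ((h.comp (neg_zero (G := ℝ) ▸ tendsto_neg_nhdsLT)).neg).congr fun t => ?_
    simp only [Function.comp_apply, neg_smul, smul_neg, neg_neg, div_neg]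
  rw [rhoMinus, hneg.limUnder_eq, mul_neg]

theorem rhoDer_zero_left (y : E) : rhoDer 0 y = 0 := by
  simp [rhoDer, rhoPlus, rhoMinus]

end NormDerivative

namespace ContinuousMap

variable {K : Type*} [TopologicalSpace K] [CompactSpace K]

def peakSet (f : C(K, ℝ)) : Set K := {k | |f k| = ‖f‖}

@[simp]
theorem mem_peakSet {f : C(K, ℝ)} {k : K} : k ∈ peakSet f ↔ |f k| = ‖f‖ := Iff.rfl

theorem abs_apply_le_norm (f : C(K, ℝ)) (k : K) : |f k| ≤ ‖f‖ :=
  f.norm_coe_le_norm k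

theorem abs_apply_mul_apply_le (f g : C(K, ℝ)) (k : K) : |f k * g k| ≤ ‖f‖ * ‖g‖ := by
  rw [abs_mul]
  exact mul_le_mul (f.abs_apply_le_norm k) (g.abs_apply_le_norm k) (abs_nonneg _) (norm_nonneg f)

theorem isClosed_peakSet (f : C(K, ℝ)) : IsClosed (peakSet f) :=
  isClosed_eq (continuous_abs.comp f.continuous) continuous_const

theorem peakSet_nonempty {f : C(K, ℝ)} (hf : f ≠ 0) : (peakSet f).Nonempty := by
  have : Nonempty K := by
    by_contra hK
    exact hf (ext fun k => (hK ⟨k⟩).elim)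
  obtain ⟨k₀, -, hmax⟩ := isCompact_univ.exists_isMaxOn univ_nonempty
    (continuous_abs.comp f.continuous).continuousOn
  refine ⟨k₀, le_antisymm (f.abs_apply_le_norm k₀) ((f.norm_le (abs_nonneg _)).2 fun k => ?_)⟩
  exact hmax (mem_univ k)

theorem mem_peakSet_of_abs_mul_eq {f g : C(K, ℝ)} (hf : f ≠ 0) (hg : g ≠ 0) {k : K}
    (h : |f k * g k| = ‖f‖ * ‖g‖) : k ∈ peakSet f ∧ k ∈ peakSet g := by
  have hF := norm_pos_iff.2 hf
  have hG := norm_pos_iff.2 hg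
  have hfk := f.abs_apply_le_norm k
  have hgk := g.abs_apply_le_norm k
  rw [abs_mul] at h
  constructor
  · by_contra hne
    have hlt : |f k| < ‖f‖ := lt_of_le_of_ne hfk hne
    nlinarith [mul_le_mul_of_nonneg_left hgk (abs_nonneg (f k))]
  · by_contra hne
    have hlt : |g k| < ‖g‖ := lt_of_le_of_ne hgk hne
    nlinarith [mul_le_mul_of_nonneg_right hfk (abs_nonneg (g k))]

theorem le_norm_mul_norm_add_smul_of_mem_peakSet (f g : C(K, ℝ)) {k₀ : K}
    (hk₀ : k₀ ∈ peakSet f) (t : ℝ) :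
    ‖f‖ * ‖f‖ + t * (f k₀ * g k₀) ≤ ‖f‖ * ‖f + t • g‖ := by
  have hsq : f k₀ * f k₀ = ‖f‖ * ‖f‖ := by rw [← hk₀, abs_mul_abs_self]
  have hle : |f k₀ + t * g k₀| ≤ ‖f + t • g‖ := by
    simpa using (f + t • g).abs_apply_le_norm k₀
  calc ‖f‖ * ‖f‖ + t * (f k₀ * g k₀) = f k₀ * (f k₀ + t * g k₀) := by rw [← hsq]; ring
    _ ≤ |f k₀ * (f k₀ + t * g k₀)| := le_abs_self _
    _ = ‖f‖ * |f k₀ + t * g k₀| := by rw [abs_mul, hk₀]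
    _ ≤ ‖f‖ * ‖f + t • g‖ := mul_le_mul_of_nonneg_left hle (norm_nonneg f)

/- Near the peak set, `f g < (c + ε/2) ‖f‖` and squaring `f + t g` gives the bound; away from it,
`|f|` stays below some `m < ‖f‖`, which absorbs the perturbation for small `t`. -/
theorem eventually_norm_add_smul_le {f g : C(K, ℝ)} (hf : f ≠ 0) {c : ℝ}
    (hc : ∀ k ∈ peakSet f, f k * g k ≤ c * ‖f‖) {ε : ℝ} (hε : 0 < ε) :
    ∀ᶠ t in 𝓝[>] (0 : ℝ), ‖f + t • g‖ ≤ ‖f‖ + t * (c + ε) := by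
  set F := ‖f‖
  set G := ‖g‖
  have hF : 0 < F := norm_pos_iff.2 hf
  set W : Set K := {k | f k * g k < (c + ε / 2) * F}
  have hWopen : IsOpen W := isOpen_lt (f.continuous.mul g.continuous) continuous_const
  obtain ⟨m, hmF, hm⟩ : ∃ m < F, ∀ k ∈ Wᶜ, |f k| ≤ m := by
    refine hWopen.isClosed_compl.isCompact.exists_lt_forall_le_of_forall_lt
      (continuous_abs.comp f.continuous).continuousOn fun k hk => ?_
    refine lt_of_le_of_ne (f.abs_apply_le_norm k) fun hpeak => hk ?_
    show f k * g k < (c + ε / 2) * F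
    nlinarith [hc k hpeak]
  have small : ∀ a {b : ℝ}, 0 < b → ∀ᶠ t in 𝓝 (0 : ℝ), t * a < b := fun a b hb =>
    ((continuous_id.mul continuous_const).tendsto' 0 0 (zero_mul a)).eventually_lt_const hb
  filter_upwards [nhdsWithin_le_nhds ((small (G - (c + ε)) (sub_pos.2 hmF)).and
    ((small (G ^ 2) (mul_pos hε hF)).and (small (-(c + ε)) hF))), self_mem_nhdsWithin]
    with t ⟨hout, hsq, hpos⟩ (ht : 0 < t)
  refine ((f + t • g).norm_le (by linarith)).2 fun k => ?_
  have hgk := g.abs_apply_le_norm k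
  rw [Real.norm_eq_abs, add_apply, smul_apply, smul_eq_mul]
  by_cases hk : k ∈ W
  · have hfk := f.abs_apply_le_norm k
    refine abs_le_of_sq_le_sq ?_ (by linarith)
    have hf2 : f k ^ 2 ≤ F ^ 2 := by rw [← sq_abs]; gcongr
    have hg2 : g k ^ 2 ≤ G ^ 2 := by rw [← sq_abs (g k)]; gcongr
    nlinarith [mul_lt_mul_of_pos_left (show f k * g k < (c + ε / 2) * F from hk) ht,
      mul_le_mul_of_nonneg_left hg2 (mul_nonneg ht.le ht.le), mul_lt_mul_of_pos_left hsq ht,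
      sq_nonneg (t * (c + ε))]
  · calc |f k + t * g k| ≤ |f k| + t * |g k| := by
          simpa [abs_mul, abs_of_pos ht] using abs_add_le (f k) (t * g k)
      _ ≤ m + t * G := add_le_add (hm k hk) (mul_le_mul_of_nonneg_left hgk ht.le)
      _ ≤ F + t * (c + ε) := by linarith

theorem tendsto_norm_add_smul_sub_div_of_isMaxOn {f g : C(K, ℝ)} (hf : f ≠ 0) {k₀ : K}
    (hk₀ : k₀ ∈ peakSet f) (hmax : IsMaxOn (fun k => f k * g k) (peakSet f) k₀) :
    Tendsto (fun t : ℝ => (‖f + t • g‖ - ‖f‖) / t) (𝓝[>] 0) (𝓝 (f k₀ * g k₀ / ‖f‖)) := by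
  have hF : 0 < ‖f‖ := norm_pos_iff.2 hf
  set c := f k₀ * g k₀ / ‖f‖
  have hcF : c * ‖f‖ = f k₀ * g k₀ := div_mul_cancel₀ _ hF.ne'
  refine tendsto_order.2 ⟨fun a ha => ?_, fun b hb => ?_⟩
  · filter_upwards [self_mem_nhdsWithin] with t (ht : 0 < t)
    have hlow := le_norm_mul_norm_add_smul_of_mem_peakSet f g hk₀ t
    rw [lt_div_iff₀ ht]
    nlinarith [mul_lt_mul_of_pos_right ha ht]
  · have hc : ∀ k ∈ peakSet f, f k * g k ≤ c * ‖f‖ := fun k hk => hcF ▸ hmax hk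
    filter_upwards [eventually_norm_add_smul_le hf hc (half_pos (sub_pos.2 hb)),
      self_mem_nhdsWithin] with t hup (ht : 0 < t)
    rw [div_lt_iff₀ ht]
    nlinarith

theorem rhoPlus_eq_of_isMaxOn {f g : C(K, ℝ)} (hf : f ≠ 0) {k₀ : K} (hk₀ : k₀ ∈ peakSet f)
    (hmax : IsMaxOn (fun k => f k * g k) (peakSet f) k₀) : rhoPlus f g = f k₀ * g k₀ := by
  rw [rhoPlus_eq_of_tendsto (tendsto_norm_add_smul_sub_div_of_isMaxOn hf hk₀ hmax),
    mul_div_cancel₀ _ (norm_ne_zero_iff.2 hf)]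

theorem rhoMinus_eq_of_isMinOn {f g : C(K, ℝ)} (hf : f ≠ 0) {k₀ : K} (hk₀ : k₀ ∈ peakSet f)
    (hmin : IsMinOn (fun k => f k * g k) (peakSet f) k₀) : rhoMinus f g = f k₀ * g k₀ := by
  have hmax : IsMaxOn (fun k => f k * (-g) k) (peakSet f) k₀ := fun k hk => by
    simpa using hmin hk
  rw [rhoMinus_eq_of_tendsto (tendsto_norm_add_smul_sub_div_of_isMaxOn hf hk₀ hmax),
    mul_div_cancel₀ _ (norm_ne_zero_iff.2 hf)]
  simp

theorem exists_rhoDer_eq (f g : C(K, ℝ)) (hf : f ≠ 0) :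
    ∃ kp ∈ peakSet f, ∃ km ∈ peakSet f, IsMaxOn (fun k => f k * g k) (peakSet f) kp ∧
      IsMinOn (fun k => f k * g k) (peakSet f) km ∧
      rhoDer f g = (f kp * g kp + f km * g km) / 2 := by
  have hcomp := (isClosed_peakSet f).isCompact
  have hcont : ContinuousOn (fun k => f k * g k) (peakSet f) :=
    (f.continuous.mul g.continuous).continuousOn
  obtain ⟨kp, hkp, hmax⟩ := hcomp.exists_isMaxOn (peakSet_nonempty hf) hcont
  obtain ⟨km, hkm, hmin⟩ := hcomp.exists_isMinOn (peakSet_nonempty hf) hcont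
  exact ⟨kp, hkp, km, hkm, hmax, hmin, by
    rw [rhoDer, rhoPlus_eq_of_isMaxOn hf hkp hmax, rhoMinus_eq_of_isMinOn hf hkm hmin]⟩

theorem rhoDer_eq_of_forall_mem_peakSet {f g : C(K, ℝ)} (hf : f ≠ 0) {k₀ : K}
    (h : ∀ k ∈ peakSet f, f k * g k = f k₀ * g k₀) : rhoDer f g = f k₀ * g k₀ := by
  obtain ⟨kp, hkp, km, hkm, -, -, hρ⟩ := exists_rhoDer_eq f g hf
  rw [hρ, h kp hkp, h km hkm, add_self_div_two]

/- `f g` is bounded by `‖g‖`, and on the peak set of `g` it only takes the values `0, ±‖g‖`;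
the value `‖g‖` (resp. `-‖g‖`) is attained on the peak set of `f` iff it is attained at all,
iff it is attained on the peak set of `g`. -/
theorem rhoDer_eq_zero_of_rhoDer_eq_zero {f g : C(K, ℝ)} (hf : ‖f‖ = 1)
    (hf01 : ∀ k, |f k| < 1 → f k = 0) (hfg : rhoDer f g = 0) : rhoDer g f = 0 := by
  rcases eq_or_ne g 0 with rfl | hg
  · exact rhoDer_zero_left f
  have hf0 : f ≠ 0 := by rintro rfl; simp at hf
  obtain ⟨kp, hkp, km, hkm, hmax, hmin, hρ⟩ := exists_rhoDer_eq f g hf0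
  obtain ⟨pp, hpp, pm, hpm, hmax', hmin', hρ'⟩ := exists_rhoDer_eq g f hg
  rw [hρ] at hfg
  rw [hρ']
  have hbound : ∀ k, |f k * g k| ≤ ‖g‖ := fun k => by
    simpa [hf] using abs_apply_mul_apply_le f g k
  have hpeak : ∀ k, |f k * g k| = ‖g‖ → k ∈ peakSet f ∧ k ∈ peakSet g := fun k hk =>
    mem_peakSet_of_abs_mul_eq hf0 hg (by rw [hk, hf, one_mul])
  have hvalues : ∀ k ∈ peakSet g, f k * g k = 0 ∨ |f k * g k| = ‖g‖ := fun k hk => by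
    rcases (f.abs_apply_le_norm k).lt_or_eq with hlt | heq
    · exact .inl (by rw [hf01 k (hf ▸ hlt), zero_mul])
    · exact .inr (by rw [abs_mul, heq, hf, one_mul]; exact hk)
  have hP := abs_le.1 (hbound kp)
  have hP' := abs_le.1 (hbound pp)
  have hQ' := abs_le.1 (hbound pm)
  have horder : g pm * f pm ≤ g pp * f pp := hmax' hpm
  by_cases hmaxval : f kp * g kp = ‖g‖
  · have hminval : |f km * g km| = ‖g‖ := by
      rw [show f km * g km = -‖g‖ by linarith, abs_neg, abs_of_nonneg (norm_nonneg g)]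
    have h1 : g kp * f kp ≤ g pp * f pp := hmax' (hpeak kp (by rw [hmaxval, abs_norm])).2
    have h2 : g pm * f pm ≤ g km * f km := hmin' (hpeak km hminval).2
    linarith
  · have hpp_nonpos : g pp * f pp ≤ 0 := by
      by_contra! hpos
      rcases hvalues pp hpp with h0 | h1
      · linarith
      · have hle : f pp * g pp ≤ f kp * g kp := hmax (hpeak pp h1).1
        rw [abs_of_pos (by linarith)] at h1
        exact hmaxval (by linarith)
    have hpm_nonneg : 0 ≤ g pm * f pm := by
      by_contra! hneg
      rcases hvalues pm hpm with h0 | h1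
      · linarith
      · have hle : f km * g km ≤ f pm * g pm := hmin (hpeak pm h1).1
        rw [abs_of_neg (by linarith)] at h1
        exact hmaxval (by linarith)
    linarith

theorem exists_rhoDer_eq_zero_and_rhoDer_ne_zero [T2Space K] [PerfectlyNormalSpace K]
    {f : C(K, ℝ)} {k₀ : K} (hk₀ : k₀ ∉ peakSet f) (hfk₀ : f k₀ ≠ 0) :
    ∃ g : C(K, ℝ), rhoDer f g = 0 ∧ rhoDer g f ≠ 0 := by
  have hf : f ≠ 0 := fun h => hfk₀ (by simp [h])
  obtain ⟨g, hg1, hg0, -, hg01⟩ := exists_continuous_one_zero_of_isCompact_of_isGδ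
    isCompact_singleton isClosed_singleton.isGδ (isClosed_peakSet f)
    (disjoint_singleton_left.2 hk₀)
  have hg_eq_one : ∀ k, g k = 1 ↔ k = k₀ := fun k => by
    rw [← mem_singleton_iff (a := k), hg1]; rfl
  have hgk₀ : g k₀ = 1 := (hg_eq_one k₀).2 rfl
  have hgnorm : ‖g‖ = 1 := by
    refine le_antisymm ((g.norm_le zero_le_one).2 fun k => ?_) ?_
    · rw [Real.norm_eq_abs, abs_of_nonneg (hg01 k).1]; exact (hg01 k).2
    · simpa [hgk₀] using g.norm_coe_le_norm k₀
  have hg : g ≠ 0 := by rintro rfl; simp at hgnorm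
  have hpeak_g : ∀ k ∈ peakSet g, k = k₀ := fun k hk => by
    rw [mem_peakSet, hgnorm, abs_of_nonneg (hg01 k).1] at hk
    exact (hg_eq_one k).1 hk
  have hg0' : ∀ k ∈ peakSet f, g k = 0 := fun k hk => hg0 hk
  obtain ⟨k₁, hk₁⟩ := peakSet_nonempty hf
  refine ⟨g, ?_, ?_⟩
  · rw [rhoDer_eq_of_forall_mem_peakSet hf (k₀ := k₁) fun k hk => by
      simp [hg0' k hk, hg0' k₁ hk₁]]
    simp [hg0' k₁ hk₁]
  · rw [rhoDer_eq_of_forall_mem_peakSet hg (k₀ := k₀) fun k hk => by rw [hpeak_g k hk]]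
    simpa [hgk₀] using hfk₀

end ContinuousMap

theorem stmt18 {K : Type*} [TopologicalSpace K] [CompactSpace K] [T2Space K]
    [PerfectlyNormalSpace K]
    (f : C(K, ℝ)) (hf : ‖f‖ = 1) :
    (∀ g : C(K, ℝ), rhoDer f g = 0 → rhoDer g f = 0) ↔
      (∀ k : K, |f k| < 1 → f k = 0) := by
  refine ⟨fun hsym k hk => ?_, fun h g => ContinuousMap.rhoDer_eq_zero_of_rhoDer_eq_zero hf h⟩
  by_contra hfk
  have hk_not_peak : k ∉ ContinuousMap.peakSet f := by
    simp [hf, hk.ne]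
  obtain ⟨g, hfg, hgf⟩ := ContinuousMap.exists_rhoDer_eq_zero_and_rhoDer_ne_zero hk_not_peak hfk
  exact hgf (hsym g hfg)
end
end

section
/- Let K be a compact, perfectly normal topological space. A real-valued function f ∈ C(K) with ‖f‖ = 1 is a ρ-right symmetric point of C(K) if and only if both of the following hold: (i) f(k) ≠ 0 for every k ∈ K; (ii) for all k₁, k₂ ∈ K with k₁ ≠ k₂, if |f(k₁)| = |f(k₂)| then |f(k₁)| = |f(k₂)| = 1. -/
open Filter Topology Set Metric NormedSpace

noncomputable section

namespace S19

lemma sgn_mul_self (r : ℝ) : Real.sign r * r = |r| := by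
  rcases lt_trichotomy r 0 with h | h | h
  · rw [Real.sign_of_neg h, abs_of_neg h]; ring
  · simp [h]
  · rw [Real.sign_of_pos h, abs_of_pos h]; ring

lemma abs_sgn_le (r : ℝ) : |Real.sign r| ≤ 1 := by
  rcases Real.sign_apply_eq r with h | h | h <;> rw [h] <;> norm_num

lemma sgn_abs {r : ℝ} (h : r ≠ 0) : |Real.sign r| = 1 := by
  rcases Real.sign_apply_eq_of_ne_zero r h with h1 | h1 <;> rw [h1] <;> norm_num

lemma sgn_sq {r : ℝ} (h : r ≠ 0) : Real.sign r * Real.sign r = 1 := by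
  rcases Real.sign_apply_eq_of_ne_zero r h with h1 | h1 <;> rw [h1] <;> norm_num

lemma sgn_eq_div {r : ℝ} (h : r ≠ 0) : Real.sign r = r / |r| := by
  rcases lt_trichotomy r 0 with h1 | h1 | h1
  · rw [Real.sign_of_neg h1, abs_of_neg h1, div_neg, div_self h]
  · exact absurd h1 h
  · rw [Real.sign_of_pos h1, abs_of_pos h1, div_self h]

lemma sgn_mul_sgn_of_pos {a b : ℝ} (h : 0 < a * b) : Real.sign a * Real.sign b = 1 := by
  rcases lt_trichotomy a 0 with ha | ha | ha
  · have hb : b < 0 := by nlinarith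
    rw [Real.sign_of_neg ha, Real.sign_of_neg hb]; ring
  · simp [ha] at h
  · have hb : 0 < b := by nlinarith
    rw [Real.sign_of_pos ha, Real.sign_of_pos hb]; ring

variable {K : Type*} [TopologicalSpace K] [CompactSpace K]

lemma exists_attain [Nonempty K] (x : C(K, ℝ)) :
    ∃ p : K, |x p| = ‖x‖ := by
  obtain ⟨p, -, hp'⟩ := isCompact_univ.exists_isMaxOn univ_nonempty
    ((map_continuous x).abs.continuousOn)
  have hp : ∀ k : K, |x k| ≤ |x p| := fun k => hp' (mem_univ k)
  refine ⟨p, le_antisymm ?_ ?_⟩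
  · simpa [Real.norm_eq_abs] using x.norm_coe_le_norm p
  · exact (ContinuousMap.norm_le _ (abs_nonneg _)).2 fun k => by
      simpa [Real.norm_eq_abs] using hp k

set_option maxHeartbeats 1000000 in
lemma tendsto_right [Nonempty K] (x y : C(K, ℝ)) (hx : ‖x‖ ≠ 0) (p : K)
    (hp : |x p| = ‖x‖)
    (hmax : ∀ k, |x k| = ‖x‖ → Real.sign (x k) * y k ≤ Real.sign (x p) * y p) :
    Tendsto (fun t => (‖x + t • y‖ - ‖x‖) / t) (𝓝[>] (0:ℝ))
      (𝓝 (Real.sign (x p) * y p)) := by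
  set L := Real.sign (x p) * y p with hL
  have hxpos : 0 < ‖x‖ := (norm_nonneg x).lt_of_ne (Ne.symm hx)
  have lower : ∀ t : ℝ, 0 < t → L ≤ (‖x + t • y‖ - ‖x‖) / t := by
    intro t ht
    rw [le_div_iff₀ ht]
    have h2 : |x p + t * y p| ≤ ‖x + t • y‖ := by
      simpa [Real.norm_eq_abs] using (x + t • y).norm_coe_le_norm p
    have h3 : Real.sign (x p) * (x p + t * y p) ≤ |x p + t * y p| := by
      calc Real.sign (x p) * (x p + t * y p) ≤ |Real.sign (x p) * (x p + t * y p)| :=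
            le_abs_self _
        _ ≤ 1 * |x p + t * y p| := by
            rw [abs_mul]
            exact mul_le_mul_of_nonneg_right (abs_sgn_le _) (abs_nonneg _)
        _ = |x p + t * y p| := one_mul _
    have h4 : Real.sign (x p) * x p = ‖x‖ := by rw [sgn_mul_self, hp]
    nlinarith [h2, h3, h4]
  have upper : ∀ ε : ℝ, 0 < ε → ∀ᶠ t in 𝓝[>] (0:ℝ),
      (‖x + t • y‖ - ‖x‖) / t ≤ L + ε := by
    intro ε hε
    set U : Set K := {k | ‖x‖ / 2 < |x k|} ∩ {k | x k * y k < (L + ε) * |x k|} with hU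
    have hUopen : IsOpen U :=
      (isOpen_lt continuous_const (map_continuous x).abs).inter
        (isOpen_lt ((map_continuous x).mul (map_continuous y))
          (continuous_const.mul (map_continuous x).abs))
    have hMU : ∀ k, |x k| = ‖x‖ → k ∈ U := by
      intro k hk
      constructor
      · show ‖x‖ / 2 < |x k|; rw [hk]; linarith
      · show x k * y k < (L + ε) * |x k|
        have h5 : x k * y k = (Real.sign (x k) * y k) * |x k| := by
          have := sgn_mul_self (x k)
          have hxk : x k ≠ 0 := by
            intro h; rw [h] at hk; simp at hk; exact hx hk.symm
          rw [sgn_eq_div hxk]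
          field_simp
        rw [h5]
        have h6 := hmax k hk
        have : |x k| > 0 := by rw [hk]; exact hxpos
        nlinarith
    have hCbd : ∃ δ : ℝ, 0 < δ ∧ ∀ k, k ∉ U → |x k| ≤ ‖x‖ - δ := by
      by_cases hne : (Uᶜ : Set K).Nonempty
      · obtain ⟨c, hcmem, hc'⟩ := (hUopen.isClosed_compl.isCompact).exists_isMaxOn hne
          ((map_continuous x).abs.continuousOn)
        have hc : ∀ k, k ∉ U → |x k| ≤ |x c| := fun k hk => hc' hk
        have hlt : |x c| < ‖x‖ := by
          rcases lt_or_eq_of_le (by simpa [Real.norm_eq_abs] using x.norm_coe_le_norm c) with h | h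
          · exact h
          · exact absurd (hMU c h) hcmem
        exact ⟨‖x‖ - |x c|, by linarith, fun k hk => by have := hc k hk; linarith⟩
      · exact ⟨‖x‖, hxpos, fun k hk => absurd ⟨k, hk⟩ hne⟩
    obtain ⟨δ, hδ, hCb⟩ := hCbd
    set ny := ‖y‖ with hny
    set c1 := |L + ε| with hc1
    have hny0 : 0 ≤ ny := norm_nonneg y
    have hc10 : 0 ≤ c1 := abs_nonneg _
    set t₀ := min (‖x‖ / (2 * (ny + 1))) (min (δ / (ny + c1 + 1)) (‖x‖ / (c1 + 1))) with ht₀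
    have ht₀pos : 0 < t₀ := by
      refine lt_min (by positivity) (lt_min (by positivity) (by positivity))
    filter_upwards [Ioo_mem_nhdsGT_of_mem (Set.left_mem_Ico.2 ht₀pos)] with t ht
    obtain ⟨htpos, htlt⟩ := ht
    have hb1 : t * ny < ‖x‖ / 2 := by
      have := lt_of_lt_of_le htlt (min_le_left _ _)
      rw [lt_div_iff₀ (by positivity)] at this
      nlinarith
    have hb2 : t * ny ≤ δ + t * (L + ε) := by
      have := lt_of_lt_of_le htlt ((min_le_right _ _).trans (min_le_left _ _))
      rw [lt_div_iff₀ (by positivity)] at this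
      have : t * (ny + c1) < δ := by nlinarith
      have hLe : -(L + ε) ≤ c1 := neg_le_abs _
      nlinarith
    have hb3 : t * c1 ≤ ‖x‖ := by
      have := lt_of_lt_of_le htlt ((min_le_right _ _).trans (min_le_right _ _))
      rw [lt_div_iff₀ (by positivity)] at this
      nlinarith
    have hnonneg : 0 ≤ ‖x‖ + t * (L + ε) := by
      have : -(L + ε) ≤ c1 := neg_le_abs _
      nlinarith
    have pointwise : ∀ k, |x k + t * y k| ≤ ‖x‖ + t * (L + ε) := by
      intro k
      have hyk : |y k| ≤ ny := by simpa [Real.norm_eq_abs] using y.norm_coe_le_norm k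
      have hxker : |x k| ≤ ‖x‖ := by simpa [Real.norm_eq_abs] using x.norm_coe_le_norm k
      by_cases hk : k ∈ U
      · obtain ⟨h1, h2⟩ := hk
        simp only [mem_setOf_eq] at h1 h2
        rcases lt_trichotomy (x k) 0 with hxk | hxk | hxk
        · rw [abs_of_neg hxk] at h1 h2
          have hyk' : -(y k) < L + ε := by nlinarith
          have hneg : x k + t * y k < 0 := by nlinarith [neg_abs_le (y k), le_abs_self (y k)]
          rw [abs_of_neg hneg]
          nlinarith [neg_abs_le (x k)]
        · exfalso; rw [hxk] at h1; simp at h1; linarith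
        · rw [abs_of_pos hxk] at h1 h2
          have hyk' : y k < L + ε := by nlinarith
          have hpos : 0 < x k + t * y k := by nlinarith [neg_abs_le (y k)]
          rw [abs_of_pos hpos]
          nlinarith [le_abs_self (x k)]
      · have := hCb k hk
        calc |x k + t * y k| ≤ |x k| + t * |y k| := by
              have := abs_add_le (x k) (t * y k)
              rw [abs_mul, abs_of_pos htpos] at this
              linarith
          _ ≤ ‖x‖ - δ + t * ny := by nlinarith
          _ ≤ ‖x‖ + t * (L + ε) := by nlinarith
    have hnorm : ‖x + t • y‖ ≤ ‖x‖ + t * (L + ε) := by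
      refine (ContinuousMap.norm_le _ hnonneg).2 fun k => ?_
      simpa [Real.norm_eq_abs, ContinuousMap.add_apply, ContinuousMap.smul_apply,
        smul_eq_mul] using pointwise k
    rw [div_le_iff₀ htpos]
    nlinarith
  rw [tendsto_order]
  constructor
  · intro b hb
    filter_upwards [self_mem_nhdsWithin] with t ht
    exact lt_of_lt_of_le hb (lower t ht)
  · intro b hb
    have hε : 0 < (b - L) / 2 := by linarith
    filter_upwards [upper _ hε] with t h
    linarith

lemma tendsto_left [Nonempty K] (x y : C(K, ℝ)) (hx : ‖x‖ ≠ 0) (q : K)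
    (hq : |x q| = ‖x‖)
    (hmin : ∀ k, |x k| = ‖x‖ → Real.sign (x q) * y q ≤ Real.sign (x k) * y k) :
    Tendsto (fun t => (‖x + t • y‖ - ‖x‖) / t) (𝓝[<] (0:ℝ))
      (𝓝 (Real.sign (x q) * y q)) := by
  have H := tendsto_right x (-y) hx q hq (fun k hk => by
    have := hmin k hk
    simp only [ContinuousMap.neg_apply]
    nlinarith)
  have hneg : Tendsto (fun t : ℝ => -t) (𝓝[<] (0:ℝ)) (𝓝[>] (0:ℝ)) := by
    refine tendsto_nhdsWithin_of_tendsto_nhds_of_eventually_within _ ?_ ?_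
    · have : Tendsto (fun t : ℝ => -t) (𝓝 (0:ℝ)) (𝓝 (-(0:ℝ))) := (continuous_neg.tendsto 0)
      simpa using this.mono_left nhdsWithin_le_nhds
    · filter_upwards [self_mem_nhdsWithin] with t ht
      exact neg_pos.2 (mem_Iio.mp ht)
  have H2 := ((H.comp hneg).neg :)
  have heq : (fun t : ℝ => -((‖x + (-t) • (-y)‖ - ‖x‖) / (-t)))
      = fun t : ℝ => (‖x + t • y‖ - ‖x‖) / t := by
    funext t
    rw [neg_smul, smul_neg, neg_neg, div_neg, neg_neg]
  have hval : -(Real.sign (x q) * (-y) q) = Real.sign (x q) * y q := by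
    simp [ContinuousMap.neg_apply]
  rw [← hval]
  convert H2 using 1
  exact heq.symm

lemma rhoDer_eq [Nonempty K] (x y : C(K, ℝ)) (hx : ‖x‖ ≠ 0) (p q : K)
    (hp : |x p| = ‖x‖) (hq : |x q| = ‖x‖)
    (hmax : ∀ k, |x k| = ‖x‖ → Real.sign (x k) * y k ≤ Real.sign (x p) * y p)
    (hmin : ∀ k, |x k| = ‖x‖ → Real.sign (x q) * y q ≤ Real.sign (x k) * y k) :
    rhoDer x y = ‖x‖ * (Real.sign (x p) * y p + Real.sign (x q) * y q) / 2 := by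
  have h1 := (tendsto_right x y hx p hp hmax).limUnder_eq
  have h2 := (tendsto_left x y hx q hq hmin).limUnder_eq
  rw [rhoDer, rhoPlus, rhoMinus, h1, h2]
  ring

lemma exists_extrema [Nonempty K] (x y : C(K, ℝ)) (hx : ‖x‖ ≠ 0) :
    ∃ p q : K, |x p| = ‖x‖ ∧ |x q| = ‖x‖ ∧
      (∀ k, |x k| = ‖x‖ → Real.sign (x k) * y k ≤ Real.sign (x p) * y p) ∧
      (∀ k, |x k| = ‖x‖ → Real.sign (x q) * y q ≤ Real.sign (x k) * y k) := by
  have hxpos : 0 < ‖x‖ := (norm_nonneg x).lt_of_ne (Ne.symm hx)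
  set M : Set K := {k | |x k| = ‖x‖} with hM
  have hMclosed : IsClosed M := isClosed_eq (map_continuous x).abs continuous_const
  have hMne : M.Nonempty := exists_attain x
  have hcont : ContinuousOn (fun k => x k * y k) M :=
    ((map_continuous x).mul (map_continuous y)).continuousOn
  obtain ⟨p, hpM, hpmax⟩ := hMclosed.isCompact.exists_isMaxOn hMne hcont
  obtain ⟨q, hqM, hqmin⟩ := hMclosed.isCompact.exists_isMinOn hMne hcont
  have key : ∀ k, |x k| = ‖x‖ → Real.sign (x k) * y k = x k * y k / ‖x‖ := by
    intro k hk
    have hxk : x k ≠ 0 := fun h => by rw [h, abs_zero] at hk; exact hx hk.symm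
    rw [sgn_eq_div hxk, hk]
    ring
  refine ⟨p, q, hpM, hqM, fun k hk => ?_, fun k hk => ?_⟩
  · rw [key k hk, key p hpM]
    exact div_le_div_of_nonneg_right (hpmax hk) hxpos.le |>.trans_eq rfl
  · rw [key k hk, key q hqM]
    exact div_le_div_of_nonneg_right (hqmin hk) hxpos.le |>.trans_eq rfl

lemma bump [T2Space K] [PerfectlyNormalSpace K] (C U : Set K) (hC : IsClosed C)
    (hU : IsOpen U) (hCU : C ⊆ U) :
    ∃ φ : C(K, ℝ), (∀ k, φ k = 1 ↔ k ∈ C) ∧ (∀ k, k ∉ U → φ k = 0) ∧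
      (∀ k, 0 ≤ φ k) ∧ (∀ k, φ k ≤ 1) := by
  obtain ⟨φ, h1, h2, -, h4⟩ := exists_continuous_one_zero_of_isCompact_of_isGδ
    hC.isCompact (PerfectlyNormalSpace.closed_gdelta hC) hU.isClosed_compl
    (disjoint_compl_right_iff_subset.mpr hCU)
  refine ⟨φ, fun k => ?_, fun k hk => h2 hk, fun k => (h4 k).1, fun k => (h4 k).2⟩
  constructor
  · intro h; have : k ∈ φ ⁻¹' {1} := h; rw [← h1] at this; exact this
  · intro h; have : k ∈ C := h; rw [h1] at this; exact this

lemma sgn_sgn {r : ℝ} (h : r ≠ 0) : Real.sign (Real.sign r) = Real.sign r := by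
  rcases Real.sign_apply_eq_of_ne_zero r h with h1 | h1 <;> rw [h1]
  · rw [Real.sign_of_neg (by norm_num : (-1:ℝ) < 0)]
  · exact Real.sign_one

lemma Hcalc {a gk fk : ℝ} (hg : gk ≠ 0) (ha : a = 1 ∨ a = -1)
    (hfk : fk = a * Real.sign gk) : Real.sign fk * gk = a * |gk| := by
  have s1 : Real.sign (1:ℝ) = 1 := Real.sign_one
  have sm1 : Real.sign (-1:ℝ) = -1 := by rw [Real.sign_of_neg]; norm_num
  rcases ha with rfl | rfl <;> rcases lt_or_gt_of_ne hg with h | h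
  · rw [hfk, Real.sign_of_neg h, abs_of_neg h]; norm_num [sm1]
  · rw [hfk, Real.sign_of_pos h, abs_of_pos h]; norm_num [s1]
  · rw [hfk, Real.sign_of_neg h, abs_of_neg h]; norm_num [s1]
  · rw [hfk, Real.sign_of_pos h, abs_of_pos h]; norm_num [sm1]

lemma rhoDer_pos_aux [Nonempty K] (f g : C(K, ℝ)) (hf : ‖f‖ = 1)
    (p₀ : K) (hp₀ : |f p₀| = 1)
    (hnn : ∀ k, |f k| = 1 → 0 ≤ Real.sign (f k) * g k)
    (hval : Real.sign (f p₀) * g p₀ = 1 / 2) : rhoDer f g ≠ 0 := by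
  have hfne : ‖f‖ ≠ 0 := by rw [hf]; exact one_ne_zero
  obtain ⟨P, Q, hP, hQ, hmax, hmin⟩ := exists_extrema f g hfne
  rw [rhoDer_eq f g hfne P Q hP hQ hmax hmin, hf]
  have h1 := hmax p₀ (by rw [hf]; exact hp₀)
  have h2 : 0 ≤ Real.sign (f Q) * g Q := hnn Q (by rw [← hf]; exact hQ)
  rw [hval] at h1
  intro hcon
  nlinarith

end S19

namespace S19
section Main
variable {K : Type*} [TopologicalSpace K] [CompactSpace K] [T2Space K]
  [PerfectlyNormalSpace K]

theorem reverse_dir [Nonempty K] (f : C(K, ℝ)) (hf : ‖f‖ = 1)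
    (hi : ∀ k : K, f k ≠ 0)
    (hii : ∀ k₁ k₂ : K, k₁ ≠ k₂ → |f k₁| = |f k₂| → |f k₁| = 1 ∧ |f k₂| = 1)
    (g : C(K, ℝ)) (hg0 : rhoDer g f = 0) : rhoDer f g = 0 := by
  have hfne : ‖f‖ ≠ 0 := by rw [hf]; exact one_ne_zero
  by_cases hgz : ‖g‖ = 0
  · obtain ⟨p₀, hp₀⟩ := exists_attain f
    have hgzero : g = 0 := norm_eq_zero.mp hgz
    subst hgzero
    rw [rhoDer_eq f 0 hfne p₀ p₀ hp₀ hp₀ (fun k hk => by simp) (fun k hk => by simp)]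
    simp
  · obtain ⟨p, q, hpg, hqg, hmaxg, hming⟩ := exists_extrema g f hgz
    rw [rhoDer_eq g f hgz p q hpg hqg hmaxg hming] at hg0
    set a := Real.sign (g p) * f p with ha
    set b := Real.sign (g q) * f q with hb
    have hab : a + b = 0 := by
      have h1 : ‖g‖ * (a + b) = 0 := by linarith [hg0]
      rcases mul_eq_zero.mp h1 with h | h
      · exact absurd h hgz
      · exact h
    have hgp : g p ≠ 0 := fun h => hgz (by rw [h, abs_zero] at hpg; exact hpg.symm)
    have hgq : g q ≠ 0 := fun h => hgz (by rw [h, abs_zero] at hqg; exact hqg.symm)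
    have hfa : |f p| = |a| := by rw [ha, abs_mul, sgn_abs hgp, one_mul]
    have hfb : |f q| = |a| := by
      have hba : b = -a := by linarith
      have h3 : |b| = |a| := by rw [hba, abs_neg]
      rw [hb, abs_mul, sgn_abs hgq, one_mul] at h3
      exact h3
    have hane : a ≠ 0 := by
      intro h
      exact hi p (abs_eq_zero.mp (by rw [hfa, h, abs_zero]))
    have hpq : p ≠ q := by
      intro h
      apply hane
      have : a = b := by rw [ha, hb, h]
      linarith
    have habs1 := hii p q hpq (by rw [hfa, hfb])
    have haone : |a| = 1 := by rw [← hfa]; exact habs1.1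
    obtain ⟨P, Q, hPf, hQf, hmaxf, hminf⟩ := exists_extrema f g hfne
    rw [rhoDer_eq f g hfne P Q hPf hQf hmaxf hminf]
    have h2p := sgn_sq hgp
    have h2q := sgn_sq hgq
    have hfp : f p = a * Real.sign (g p) := by
      rw [ha]; linear_combination (-(f p)) * h2p
    have hfq : f q = (-a) * Real.sign (g q) := by
      have hba : b = -a := by linarith
      rw [← hba, hb]; linear_combination (-(f q)) * h2q
    have haor : a = 1 ∨ a = -1 := (abs_eq (by norm_num : (0:ℝ) ≤ 1)).mp haone
    have hHp : Real.sign (f p) * g p = a * ‖g‖ := by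
      rw [Hcalc hgp haor hfp, hpg]
    have hHq : Real.sign (f q) * g q = (-a) * ‖g‖ := by
      have haor' : -a = 1 ∨ -a = -1 := by rcases haor with h | h <;> rw [h] <;> norm_num
      rw [Hcalc hgq haor' hfq, hqg]
    have hbound : ∀ k : K, |Real.sign (f k) * g k| ≤ ‖g‖ := by
      intro k
      rw [abs_mul]
      have h1 := abs_sgn_le (f k)
      have h2 : |g k| ≤ ‖g‖ := by simpa [Real.norm_eq_abs] using g.norm_coe_le_norm k
      nlinarith [abs_nonneg (g k)]
    have hpMf : |f p| = ‖f‖ := by rw [hf]; exact habs1.1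
    have hqMf : |f q| = ‖f‖ := by rw [hf]; exact habs1.2
    have hsum : Real.sign (f P) * g P + Real.sign (f Q) * g Q = 0 := by
      rcases haor with h1 | h1
      · have e1 : Real.sign (f P) * g P = ‖g‖ := by
          refine le_antisymm ((le_abs_self _).trans (hbound P)) ?_
          have := hmaxf p hpMf
          rw [hHp, h1, one_mul] at this
          exact this
        have e2 : Real.sign (f Q) * g Q = -‖g‖ := by
          refine le_antisymm ?_ ?_
          · have := hminf q hqMf
            rw [hHq, h1] at this
            linarith
          · have := hbound Q
            have := neg_abs_le (Real.sign (f Q) * g Q)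
            linarith
        rw [e1, e2]; ring
      · have e1 : Real.sign (f P) * g P = ‖g‖ := by
          refine le_antisymm ((le_abs_self _).trans (hbound P)) ?_
          have := hmaxf q hqMf
          rw [hHq, h1] at this
          linarith
        have e2 : Real.sign (f Q) * g Q = -‖g‖ := by
          refine le_antisymm ?_ ?_
          · have := hminf p hpMf
            rw [hHp, h1] at this
            linarith
          · have := hbound Q
            have := neg_abs_le (Real.sign (f Q) * g Q)
            linarith
        rw [e1, e2]; ring
    rw [hsum]
    simp

theorem case_zero [Nonempty K] (f : C(K, ℝ)) (hf : ‖f‖ = 1) (k₀ : K)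
    (hk₀ : f k₀ = 0) : ∃ g : C(K, ℝ), rhoDer g f = 0 ∧ rhoDer f g ≠ 0 := by
  have hfne : ‖f‖ ≠ 0 := by rw [hf]; exact one_ne_zero
  obtain ⟨p₀, hp₀⟩ := exists_attain f
  rw [hf] at hp₀
  have hfp₀ : f p₀ ≠ 0 := by intro h; rw [h, abs_zero] at hp₀; norm_num at hp₀
  have hne : k₀ ≠ p₀ := fun h => hfp₀ (h ▸ hk₀)
  obtain ⟨O₀, O₁, hO₀, hO₁, hk₀O, hp₀O, hdisjO⟩ := t2_separation hne
  set W : Set K := {k | |f k| < 1 / 2} with hW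
  have hWopen : IsOpen W := isOpen_lt (map_continuous f).abs continuous_const
  have hk₀W : k₀ ∈ W := by simp only [hW, mem_setOf_eq, hk₀, abs_zero]; norm_num
  set V : Set K := {k | 0 < f k * f p₀} with hV
  have hVopen : IsOpen V :=
    isOpen_lt continuous_const ((map_continuous f).mul continuous_const)
  have hp₀V : p₀ ∈ V := by
    simp only [hV, mem_setOf_eq]
    exact mul_self_pos.mpr hfp₀
  obtain ⟨φ, hφ1, hφ0, hφnn, hφle⟩ := bump {k₀} (W ∩ O₀) isClosed_singleton
    (hWopen.inter hO₀) (singleton_subset_iff.mpr ⟨hk₀W, hk₀O⟩)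
  obtain ⟨ψ, hψ1, hψ0, hψnn, hψle⟩ := bump {p₀} (V ∩ O₁) isClosed_singleton
    (hVopen.inter hO₁) (singleton_subset_iff.mpr ⟨hp₀V, hp₀O⟩)
  set g : C(K, ℝ) := φ + (Real.sign (f p₀) / 2) • ψ with hg
  have hgapp : ∀ k, g k = φ k + Real.sign (f p₀) / 2 * ψ k := fun k => by
    simp [hg, ContinuousMap.add_apply, ContinuousMap.smul_apply, smul_eq_mul]
  have hφsupp : ∀ k, φ k ≠ 0 → k ∈ W ∩ O₀ := fun k h => by
    by_contra hm; exact h (hφ0 k hm)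
  have hψsupp : ∀ k, ψ k ≠ 0 → k ∈ V ∩ O₁ := fun k h => by
    by_contra hm; exact h (hψ0 k hm)
  have hdisj : ∀ k, φ k = 0 ∨ ψ k = 0 := by
    intro k
    by_contra h
    push_neg at h
    exact (Set.disjoint_left.mp hdisjO (hφsupp k h.1).2) (hψsupp k h.2).2
  have habs_sign : |Real.sign (f p₀)| = 1 := sgn_abs hfp₀
  have hcoef : |Real.sign (f p₀) / 2| = 1 / 2 := by
    rw [abs_div, habs_sign]; norm_num
  have hgle : ∀ k, |g k| ≤ 1 := by
    intro k
    rcases hdisj k with h | h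
    · rw [hgapp k, h, zero_add, abs_mul, hcoef]
      have h1 : |ψ k| ≤ 1 := abs_le.2 ⟨by linarith [hψnn k], hψle k⟩
      linarith
    · rw [hgapp k, h, mul_zero, add_zero, abs_of_nonneg (hφnn k)]
      exact hφle k
  have hψk₀ : ψ k₀ = 0 := by
    by_contra h
    exact (Set.disjoint_left.mp hdisjO hk₀O) (hψsupp k₀ h).2
  have hgk₀ : g k₀ = 1 := by
    rw [hgapp, (hφ1 k₀).2 rfl, hψk₀]; ring
  have hgnorm : ‖g‖ = 1 := by
    refine le_antisymm ((ContinuousMap.norm_le _ zero_le_one).2 fun k => by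
      simpa [Real.norm_eq_abs] using hgle k) ?_
    calc (1:ℝ) = |g k₀| := by rw [hgk₀]; norm_num
      _ ≤ ‖g‖ := by simpa [Real.norm_eq_abs] using g.norm_coe_le_norm k₀
  have hgMg : ∀ k, |g k| = ‖g‖ → k = k₀ := by
    intro k hk
    rw [hgnorm] at hk
    rcases hdisj k with h | h
    · exfalso
      rw [hgapp k, h, zero_add, abs_mul, hcoef] at hk
      have h1 : |ψ k| ≤ 1 := abs_le.2 ⟨by linarith [hψnn k], hψle k⟩
      linarith [hk.symm.le.trans (by nlinarith : 1 / 2 * |ψ k| ≤ (1:ℝ)/2)]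
    · rw [hgapp k, h, mul_zero, add_zero, abs_of_nonneg (hφnn k)] at hk
      exact mem_singleton_iff.mp ((hφ1 k).1 hk)
  have hgne : ‖g‖ ≠ 0 := by rw [hgnorm]; exact one_ne_zero
  refine ⟨g, ?_, ?_⟩
  · have hgk₀n : |g k₀| = ‖g‖ := by rw [hgk₀, hgnorm, abs_one]
    rw [rhoDer_eq g f hgne k₀ k₀ hgk₀n hgk₀n
      (fun k hk => by rw [hgMg k hk]) (fun k hk => by rw [hgMg k hk]), hk₀]
    ring
  · refine rhoDer_pos_aux f g hf p₀ hp₀ ?_ ?_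
    · intro k hk
      have hφk : φ k = 0 := by
        apply hφ0
        intro hm
        have : |f k| < 1 / 2 := hm.1
        rw [hk] at this; norm_num at this
      rw [hgapp k, hφk, zero_add]
      by_cases hψk : ψ k = 0
      · rw [hψk]; simp
      · have hkV : (0 : ℝ) < f k * f p₀ := (hψsupp k hψk).1
        have hsg : Real.sign (f k) * Real.sign (f p₀) = 1 := sgn_mul_sgn_of_pos hkV
        have : Real.sign (f k) * (Real.sign (f p₀) / 2 * ψ k)
            = Real.sign (f k) * Real.sign (f p₀) * (ψ k / 2) := by ring
        rw [this, hsg, one_mul]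
        linarith [hψnn k]
    · have hφp₀ : φ p₀ = 0 := by
        apply hφ0
        intro hm
        have : |f p₀| < 1 / 2 := hm.1
        rw [hp₀] at this; norm_num at this
      rw [hgapp p₀, hφp₀, (hψ1 p₀).2 rfl, zero_add, mul_one]
      have h := sgn_sq hfp₀
      linear_combination h / 2

set_option maxHeartbeats 1000000 in
theorem case_eq [Nonempty K] (f : C(K, ℝ)) (hf : ‖f‖ = 1)
    (k₁ k₂ : K) (h12 : k₁ ≠ k₂) (habs : |f k₁| = |f k₂|)
    (hfk₁ : f k₁ ≠ 0) (hfk₂ : f k₂ ≠ 0) (hlt : |f k₁| < 1) :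
    ∃ g : C(K, ℝ), rhoDer g f = 0 ∧ rhoDer f g ≠ 0 := by
  have hfne : ‖f‖ ≠ 0 := by rw [hf]; exact one_ne_zero
  set c := |f k₁| with hc
  have hcpos : 0 < c := abs_pos.2 hfk₁
  obtain ⟨p₀, hp₀⟩ := exists_attain f
  rw [hf] at hp₀
  have hfp₀ : f p₀ ≠ 0 := by intro h; rw [h, abs_zero] at hp₀; norm_num at hp₀
  have hnep₁ : p₀ ≠ k₁ := fun h => hlt.ne (hc.trans (h ▸ hp₀))
  have hnep₂ : p₀ ≠ k₂ := fun h => hlt.ne (habs.trans (h ▸ hp₀))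
  obtain ⟨A₁, A₂, hA₁, hA₂, hk₁A, hk₂A, hdisjA⟩ := t2_separation h12
  obtain ⟨B₀, B₁, hB₀, hB₁, hp₀B, hk₁B, hdisjB⟩ := t2_separation hnep₁
  obtain ⟨C₀, C₂, hC₀, hC₂, hp₀C, hk₂C, hdisjC⟩ := t2_separation hnep₂
  set O₀ : Set K := B₀ ∩ C₀ with hO₀def
  set O₁ : Set K := A₁ ∩ B₁ with hO₁def
  set O₂ : Set K := A₂ ∩ C₂ with hO₂def
  have hp₀O : p₀ ∈ O₀ := ⟨hp₀B, hp₀C⟩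
  have hk₁O : k₁ ∈ O₁ := ⟨hk₁A, hk₁B⟩
  have hk₂O : k₂ ∈ O₂ := ⟨hk₂A, hk₂C⟩
  have hd01 : ∀ k, k ∈ O₀ → k ∉ O₁ :=
    fun k hk h => (Set.disjoint_left.mp hdisjB hk.1) h.2
  have hd02 : ∀ k, k ∈ O₀ → k ∉ O₂ :=
    fun k hk h => (Set.disjoint_left.mp hdisjC hk.2) h.2
  have hd12 : ∀ k, k ∈ O₁ → k ∉ O₂ :=
    fun k hk h => (Set.disjoint_left.mp hdisjA hk.1) h.1
  set W : Set K := {k | |f k| < (1 + c) / 2} with hW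
  have hWopen : IsOpen W := isOpen_lt (map_continuous f).abs continuous_const
  have hk₁W : k₁ ∈ W := by simp only [hW, mem_setOf_eq, ← hc]; linarith
  have hk₂W : k₂ ∈ W := by
    simp only [hW, mem_setOf_eq, ← habs, ← hc]; linarith
  set V : Set K := {k | 0 < f k * f p₀} with hV
  have hVopen : IsOpen V :=
    isOpen_lt continuous_const ((map_continuous f).mul continuous_const)
  have hp₀V : p₀ ∈ V := mul_self_pos.mpr hfp₀
  obtain ⟨φ₁, hφ₁1, hφ₁0, hφ₁nn, hφ₁le⟩ := bump {k₁} (W ∩ O₁) isClosed_singleton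
    (hWopen.inter (hA₁.inter hB₁)) (singleton_subset_iff.mpr ⟨hk₁W, hk₁O⟩)
  obtain ⟨φ₂, hφ₂1, hφ₂0, hφ₂nn, hφ₂le⟩ := bump {k₂} (W ∩ O₂) isClosed_singleton
    (hWopen.inter (hA₂.inter hC₂)) (singleton_subset_iff.mpr ⟨hk₂W, hk₂O⟩)
  obtain ⟨ψ, hψ1, hψ0, hψnn, hψle⟩ := bump {p₀} (V ∩ O₀) isClosed_singleton
    (hVopen.inter (hB₀.inter hC₀)) (singleton_subset_iff.mpr ⟨hp₀V, hp₀O⟩)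
  set g : C(K, ℝ) := Real.sign (f k₁) • φ₁ - Real.sign (f k₂) • φ₂
      + (Real.sign (f p₀) / 2) • ψ with hg
  have hgapp : ∀ k, g k = Real.sign (f k₁) * φ₁ k - Real.sign (f k₂) * φ₂ k
      + Real.sign (f p₀) / 2 * ψ k := fun k => by
    simp [hg, ContinuousMap.add_apply, ContinuousMap.sub_apply,
      ContinuousMap.smul_apply, smul_eq_mul]
  have hφ₁supp : ∀ k, φ₁ k ≠ 0 → k ∈ W ∩ O₁ := fun k h => by
    by_contra hm; exact h (hφ₁0 k hm)
  have hφ₂supp : ∀ k, φ₂ k ≠ 0 → k ∈ W ∩ O₂ := fun k h => by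
    by_contra hm; exact h (hφ₂0 k hm)
  have hψsupp : ∀ k, ψ k ≠ 0 → k ∈ V ∩ O₀ := fun k h => by
    by_contra hm; exact h (hψ0 k hm)
  have hcase : ∀ k, (φ₂ k = 0 ∧ ψ k = 0) ∨ (φ₁ k = 0 ∧ ψ k = 0)
      ∨ (φ₁ k = 0 ∧ φ₂ k = 0) := by
    intro k
    by_cases h1 : φ₁ k = 0
    · by_cases h2 : φ₂ k = 0
      · exact Or.inr (Or.inr ⟨h1, h2⟩)
      · refine Or.inr (Or.inl ⟨h1, ?_⟩)
        by_contra h3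
        exact hd02 k (hψsupp k h3).2 (hφ₂supp k h2).2
    · refine Or.inl ⟨?_, ?_⟩
      · by_contra h2
        exact hd12 k (hφ₁supp k h1).2 (hφ₂supp k h2).2
      · by_contra h3
        exact hd01 k (hψsupp k h3).2 (hφ₁supp k h1).2
  have hs₁ : |Real.sign (f k₁)| = 1 := sgn_abs hfk₁
  have hs₂ : |Real.sign (f k₂)| = 1 := sgn_abs hfk₂
  have hs₀ : |Real.sign (f p₀)| = 1 := sgn_abs hfp₀
  have hcoef : |Real.sign (f p₀) / 2| = 1 / 2 := by rw [abs_div, hs₀]; norm_num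
  have haψ : ∀ k, |ψ k| ≤ 1 := fun k => abs_le.2 ⟨by linarith [hψnn k], hψle k⟩
  have haφ₁ : ∀ k, |φ₁ k| ≤ 1 := fun k => abs_le.2 ⟨by linarith [hφ₁nn k], hφ₁le k⟩
  have haφ₂ : ∀ k, |φ₂ k| ≤ 1 := fun k => abs_le.2 ⟨by linarith [hφ₂nn k], hφ₂le k⟩
  have hgle : ∀ k, |g k| ≤ 1 := by
    intro k
    rcases hcase k with ⟨h2, h3⟩ | ⟨h1, h3⟩ | ⟨h1, h2⟩ <;>
      rw [hgapp k]
    · rw [h2, h3, mul_zero, mul_zero, sub_zero, add_zero, abs_mul, hs₁, one_mul]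
      exact haφ₁ k
    · rw [h1, h3, mul_zero, mul_zero, add_zero, zero_sub, abs_neg, abs_mul, hs₂,
        one_mul]
      exact haφ₂ k
    · rw [h1, h2, mul_zero, mul_zero, sub_zero, zero_add, abs_mul, hcoef]
      linarith [haψ k]
  have hψk₁ : ψ k₁ = 0 := by
    by_contra h
    exact hd01 k₁ (hψsupp k₁ h).2 hk₁O
  have hψk₂ : ψ k₂ = 0 := by
    by_contra h
    exact hd02 k₂ (hψsupp k₂ h).2 hk₂O
  have hφ₂k₁ : φ₂ k₁ = 0 := by
    by_contra h
    exact hd12 k₁ hk₁O (hφ₂supp k₁ h).2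
  have hφ₁k₂ : φ₁ k₂ = 0 := by
    by_contra h
    exact hd12 k₂ (hφ₁supp k₂ h).2 hk₂O
  have hgk₁ : g k₁ = Real.sign (f k₁) := by
    rw [hgapp, (hφ₁1 k₁).2 rfl, hψk₁, hφ₂k₁]; ring
  have hgk₂ : g k₂ = -Real.sign (f k₂) := by
    rw [hgapp, (hφ₂1 k₂).2 rfl, hψk₂, hφ₁k₂]; ring
  have hgk₁a : |g k₁| = 1 := by rw [hgk₁, hs₁]
  have hgk₂a : |g k₂| = 1 := by rw [hgk₂, abs_neg, hs₂]
  have hgnorm : ‖g‖ = 1 := by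
    refine le_antisymm ((ContinuousMap.norm_le _ zero_le_one).2 fun k => by
      simpa [Real.norm_eq_abs] using hgle k) ?_
    calc (1:ℝ) = |g k₁| := hgk₁a.symm
      _ ≤ ‖g‖ := by simpa [Real.norm_eq_abs] using g.norm_coe_le_norm k₁
  have hgne : ‖g‖ ≠ 0 := by rw [hgnorm]; exact one_ne_zero
  have hgMg : ∀ k, |g k| = ‖g‖ → k = k₁ ∨ k = k₂ := by
    intro k hk
    rw [hgnorm] at hk
    rcases hcase k with ⟨h2, h3⟩ | ⟨h1, h3⟩ | ⟨h1, h2⟩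
    · left
      rw [hgapp k, h2, h3, mul_zero, mul_zero, sub_zero, add_zero, abs_mul, hs₁,
        one_mul, abs_of_nonneg (hφ₁nn k)] at hk
      exact mem_singleton_iff.mp ((hφ₁1 k).1 hk)
    · right
      rw [hgapp k, h1, h3, mul_zero, mul_zero, add_zero, zero_sub, abs_neg, abs_mul,
        hs₂, one_mul, abs_of_nonneg (hφ₂nn k)] at hk
      exact mem_singleton_iff.mp ((hφ₂1 k).1 hk)
    · exfalso
      rw [hgapp k, h1, h2, mul_zero, mul_zero, sub_zero, zero_add, abs_mul,
        hcoef] at hk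
      have := haψ k
      linarith
  have hv₁ : Real.sign (g k₁) * f k₁ = c := by
    rw [hgk₁, sgn_sgn hfk₁, sgn_mul_self]
  have hv₂ : Real.sign (g k₂) * f k₂ = -c := by
    rw [hgk₂, Real.sign_neg, sgn_sgn hfk₂, habs, neg_mul, sgn_mul_self]
  refine ⟨g, ?_, ?_⟩
  · have hn₁ : |g k₁| = ‖g‖ := by rw [hgk₁a, hgnorm]
    have hn₂ : |g k₂| = ‖g‖ := by rw [hgk₂a, hgnorm]
    have hmax : ∀ k, |g k| = ‖g‖ → Real.sign (g k) * f k ≤ Real.sign (g k₁) * f k₁ := by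
      intro k hk
      rcases hgMg k hk with rfl | rfl
      · exact le_refl _
      · rw [hv₁, hv₂]; linarith
    have hmin : ∀ k, |g k| = ‖g‖ → Real.sign (g k₂) * f k₂ ≤ Real.sign (g k) * f k := by
      intro k hk
      rcases hgMg k hk with rfl | rfl
      · rw [hv₁, hv₂]; linarith
      · exact le_refl _
    rw [rhoDer_eq g f hgne k₁ k₂ hn₁ hn₂ hmax hmin, hv₁, hv₂]
    ring
  · refine rhoDer_pos_aux f g hf p₀ hp₀ ?_ ?_
    · intro k hk
      have hWk : k ∉ W := by
        intro hm
        simp only [hW, mem_setOf_eq] at hm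
        rw [hk] at hm
        linarith
      have hφ₁k : φ₁ k = 0 := hφ₁0 k (fun hm => hWk hm.1)
      have hφ₂k : φ₂ k = 0 := hφ₂0 k (fun hm => hWk hm.1)
      rw [hgapp k, hφ₁k, hφ₂k, mul_zero, mul_zero, sub_zero, zero_add]
      by_cases hψk : ψ k = 0
      · rw [hψk]; simp
      · have hkV : (0 : ℝ) < f k * f p₀ := (hψsupp k hψk).1
        have hsg : Real.sign (f k) * Real.sign (f p₀) = 1 := sgn_mul_sgn_of_pos hkV
        have heq : Real.sign (f k) * (Real.sign (f p₀) / 2 * ψ k)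
            = Real.sign (f k) * Real.sign (f p₀) * (ψ k / 2) := by ring
        rw [heq, hsg, one_mul]
        linarith [hψnn k]
    · have hWp₀ : p₀ ∉ W := by
        intro hm
        simp only [hW, mem_setOf_eq] at hm
        rw [hp₀] at hm
        linarith
      have hφ₁p₀ : φ₁ p₀ = 0 := hφ₁0 p₀ (fun hm => hWp₀ hm.1)
      have hφ₂p₀ : φ₂ p₀ = 0 := hφ₂0 p₀ (fun hm => hWp₀ hm.1)
      rw [hgapp p₀, hφ₁p₀, hφ₂p₀, (hψ1 p₀).2 rfl, mul_zero, mul_zero, sub_zero,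
        zero_add, mul_one]
      have h := sgn_sq hfp₀
      linear_combination h / 2

end Main
end S19

theorem stmt19 {K : Type*} [TopologicalSpace K] [CompactSpace K] [T2Space K]
    [PerfectlyNormalSpace K]
    (f : C(K, ℝ)) (hf : ‖f‖ = 1) :
    (∀ g : C(K, ℝ), rhoDer g f = 0 → rhoDer f g = 0) ↔
      ((∀ k : K, f k ≠ 0) ∧
        (∀ k₁ k₂ : K, k₁ ≠ k₂ → |f k₁| = |f k₂| → |f k₁| = 1 ∧ |f k₂| = 1)) := by

  have hfne : ‖f‖ ≠ 0 := by rw [hf]; exact one_ne_zero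
  have hK : Nonempty K := by
    by_contra h
    rw [not_nonempty_iff] at h
    have h0 : ‖f‖ ≤ 0 := (ContinuousMap.norm_le _ le_rfl).2 fun k => isEmptyElim k
    rw [hf] at h0
    linarith
  constructor
  · intro hsym
    have hi : ∀ k : K, f k ≠ 0 := by
      intro k hk
      obtain ⟨g, h1, h2⟩ := S19.case_zero f hf k hk
      exact h2 (hsym g h1)
    refine ⟨hi, ?_⟩
    intro k₁ k₂ h12 habs
    by_contra hcon
    have h1 : |f k₁| ≠ 1 := fun h => hcon ⟨h, habs ▸ h⟩
    have hle : |f k₁| ≤ 1 := by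
      rw [← hf]
      simpa [Real.norm_eq_abs] using f.norm_coe_le_norm k₁
    obtain ⟨g, hg1, hg2⟩ := S19.case_eq f hf k₁ k₂ h12 habs (hi k₁) (hi k₂)
      (lt_of_le_of_ne hle h1)
    exact hg2 (hsym g hg1)
  · rintro ⟨hi, hii⟩ g hg0
    exact S19.reverse_dir f hf hi hii g hg0
end
end
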